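/- Let 1 ≤ p < ∞. There exist constants c, C > 0, depending only on p, such that for every real sequence x = (x_n)_{n≥1}: c · (∑_{j=0}^∞ 2^{j} (sup_{n∈Δ_j} |x_n|)^p)^{1/p} ≤ ‖x‖_{τℓ_p} ≤ C · (∑_{j=0}^∞ 2^{j} (sup_{n∈Δ_j} |x_n|)^p)^{1/p}, as an inequality of values in [0,∞]. -/

import Mathlib

open ENNReal

/-- The Tandori norm `‖x‖_{τℓ_p} = (∑_{n=1}^∞ (sup_{k≥n} |x_k|)^p)^{1/p}`
of a real sequence (indexed so that the entries of the sequence are `x 1, x 2, …`). -/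
noncomputable def tlNorm (p : ℝ) (x : ℕ → ℝ) : ℝ≥0∞ :=
  (∑' n : ℕ, (⨆ (k : ℕ) (_ : n + 1 ≤ k), ENNReal.ofReal |x k|) ^ p) ^ (1 / p)

/-- The block form expression
`(∑_{j=0}^∞ 2^j (sup_{n ∈ Δ_j} |x_n|)^p)^{1/p}`, where `Δ_j = {n : 2^j ≤ n < 2^{j+1}}`. -/
noncomputable def tlBlock (p : ℝ) (x : ℕ → ℝ) : ℝ≥0∞ :=
  (∑' j : ℕ, (2 : ℝ≥0∞) ^ (j : ℝ) *
      (⨆ n ∈ Finset.Ico (2 ^ j) (2 ^ (j + 1)), ENNReal.ofReal |x n|) ^ p) ^ (1 / p)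

/-!
For `n ≥ 1` the sequence `n ↦ (sup_{k ≥ n} |x_k|)^p` is nonincreasing, so by Cauchy condensation
the Tandori sum is comparable to `∑_j 2^j (sup_{k ≥ 2^j} |x_k|)^p`. Bounding this by the block sum
is trivial in one direction; in the other, `(sup_{k ≥ 2^j} |x_k|)^p ≤ ∑_{i ≥ j} (sup_{Δ_i} |x|)^p`,
and exchanging the order of summation costs the geometric factor `∑_{j ≤ i} 2^j ≤ 2^{i+1}`.
-/

namespace ENNReal

theorem tsum_ite_eq_zero_eq_tsum_succ (f : ℕ → ℝ≥0∞) :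
    ∑' n, (if n = 0 then 0 else f n) = ∑' n, f (n + 1) := by
  rw [tsum_eq_zero_add' ENNReal.summable]
  simp

variable {f : ℕ → ℝ≥0∞}

theorem tsum_succ_le_tsum_condensed (hf : ∀ ⦃m n⦄, 0 < m → m ≤ n → f n ≤ f m) :
    ∑' k, f (k + 1) ≤ ∑' k : ℕ, 2 ^ k * f (2 ^ k) := by
  let g : ℕ → ℝ≥0∞ := fun n => if n = 0 then 0 else f n
  have hg : ∀ ⦃m n⦄, 0 < m → m ≤ n → g n ≤ g m := fun m n hm hmn => by
    simpa [g, hm.ne', (hm.trans_le hmn).ne'] using hf hm hmn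
  rw [← tsum_ite_eq_zero_eq_tsum_succ]
  simpa [g] using ENNReal.le_tsum_condensed hg

theorem tsum_condensed_le_three_mul_tsum_succ (hf : ∀ ⦃m n⦄, 1 < m → m ≤ n → f n ≤ f m) :
    ∑' k : ℕ, 2 ^ k * f (2 ^ k) ≤ 3 * ∑' k, f (k + 1) := by
  let g : ℕ → ℝ≥0∞ := fun n => if n = 0 then 0 else f n
  have hg : ∀ ⦃m n⦄, 1 < m → m ≤ n → g n ≤ g m := fun m n hm hmn => by
    simpa [g, (one_pos.trans hm).ne', (one_pos.trans (hm.trans_le hmn)).ne'] using hf hm hmn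
  calc ∑' k : ℕ, 2 ^ k * f (2 ^ k) = ∑' k : ℕ, 2 ^ k * g (2 ^ k) := by simp [g]
    _ ≤ g 1 + 2 * ∑' k, g k := ENNReal.tsum_condensed_le hg
    _ ≤ ∑' k, f (k + 1) + 2 * ∑' k, f (k + 1) := by
        rw [tsum_ite_eq_zero_eq_tsum_succ]
        gcongr
        exact ENNReal.le_tsum (f := fun k => f (k + 1)) 0
    _ = 3 * ∑' k, f (k + 1) := by ring

theorem sum_range_two_pow_le (n : ℕ) : ∑ j ∈ Finset.range n, (2 : ℝ≥0∞) ^ j ≤ 2 ^ n := by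
  have h := geom_sum_mul_add (1 : ℝ≥0∞) n
  rw [one_add_one_eq_two, mul_one] at h
  exact h ▸ le_self_add

theorem tsum_two_pow_mul_tsum_ite_le (b : ℕ → ℝ≥0∞) :
    ∑' j, 2 ^ j * ∑' i, (if j ≤ i then b i else 0) ≤ 2 * ∑' i, 2 ^ i * b i := by
  calc ∑' j, 2 ^ j * ∑' i, (if j ≤ i then b i else 0)
      = ∑' i, ∑' j, (if j ≤ i then 2 ^ j * b i else 0) := by
        simp_rw [← ENNReal.tsum_mul_left, mul_ite, mul_zero]
        exact ENNReal.tsum_comm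
    _ = ∑' i, (∑ j ∈ Finset.range (i + 1), 2 ^ j) * b i := by
        refine tsum_congr fun i => ?_
        rw [Finset.sum_mul, tsum_eq_sum (s := Finset.range (i + 1))]
        · exact Finset.sum_congr rfl fun j hj => if_pos (Finset.mem_range_succ_iff.mp hj)
        · exact fun j hj => if_neg (mt Finset.mem_range_succ_iff.mpr hj)
    _ ≤ ∑' i, 2 ^ (i + 1) * b i := by gcongr with i; exact sum_range_two_pow_le _
    _ = 2 * ∑' i, 2 ^ i * b i := by
        rw [← ENNReal.tsum_mul_left]
        exact tsum_congr fun i => by ring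

theorem rpow_one_div_le_mul_of_le {s t c : ℝ≥0∞} {p : ℝ} (hc : 1 ≤ c) (hp : 1 ≤ p)
    (h : s ≤ c * t) : s ^ (1 / p) ≤ c * t ^ (1 / p) := by
  have hp' : 0 ≤ 1 / p := by positivity
  calc s ^ (1 / p) ≤ (c * t) ^ (1 / p) := ENNReal.rpow_le_rpow h hp'
    _ = c ^ (1 / p) * t ^ (1 / p) := ENNReal.mul_rpow_of_nonneg _ _ hp'
    _ ≤ c ^ (1 : ℝ) * t ^ (1 / p) := by
        gcongr
        exact (div_le_one (by positivity)).mpr hp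
    _ = c * t ^ (1 / p) := by rw [ENNReal.rpow_one]

end ENNReal

section DyadicBlocks

variable (a : ℕ → ℝ≥0∞)

noncomputable def tailSup (n : ℕ) : ℝ≥0∞ :=
  ⨆ (k : ℕ) (_ : n ≤ k), a k

noncomputable def dyadicBlockSup (j : ℕ) : ℝ≥0∞ :=
  ⨆ n ∈ Finset.Ico (2 ^ j) (2 ^ (j + 1)), a n

theorem tailSup_antitone : Antitone (tailSup a) :=
  fun _ _ hmn => biSup_mono fun _ hk => hmn.trans hk

theorem dyadicBlockSup_le_tailSup (j : ℕ) : dyadicBlockSup a j ≤ tailSup a (2 ^ j) :=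
  biSup_mono fun _ hn => (Finset.mem_Ico.mp hn).1

theorem le_dyadicBlockSup_log {k : ℕ} (hk : k ≠ 0) : a k ≤ dyadicBlockSup a (Nat.log 2 k) :=
  le_iSup₂ (f := fun n (_ : n ∈ Finset.Ico _ _) => a n) k
    (Finset.mem_Ico.mpr ⟨Nat.pow_log_le_self 2 hk, Nat.lt_pow_succ_log_self one_lt_two k⟩)

theorem tailSup_two_pow_rpow_le {p : ℝ} (hp : 0 < p) (j : ℕ) :
    tailSup a (2 ^ j) ^ p ≤ ∑' i, if j ≤ i then dyadicBlockSup a i ^ p else 0 := by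
  rw [← ENNReal.le_rpow_inv_iff hp]
  refine iSup₂_le fun k hk => ?_
  have hjk : j ≤ Nat.log 2 k := Nat.le_log_of_pow_le one_lt_two hk
  rw [ENNReal.le_rpow_inv_iff hp]
  calc a k ^ p
      ≤ dyadicBlockSup a (Nat.log 2 k) ^ p :=
        ENNReal.rpow_le_rpow (le_dyadicBlockSup_log a ((Nat.two_pow_pos j).trans_le hk).ne') hp.le
    _ ≤ _ := by
        simpa [hjk] using ENNReal.le_tsum
          (f := fun i => if j ≤ i then dyadicBlockSup a i ^ p else 0) (Nat.log 2 k)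

theorem tsum_tailSup_succ_rpow_le {p : ℝ} (hp : 0 < p) :
    ∑' n, tailSup a (n + 1) ^ p ≤ 2 * ∑' j, 2 ^ j * dyadicBlockSup a j ^ p :=
  calc ∑' n, tailSup a (n + 1) ^ p
      ≤ ∑' j : ℕ, 2 ^ j * tailSup a (2 ^ j) ^ p :=
        ENNReal.tsum_succ_le_tsum_condensed fun _ _ _ hmn =>
          ENNReal.rpow_le_rpow (tailSup_antitone a hmn) hp.le
    _ ≤ ∑' j : ℕ, 2 ^ j * ∑' i, (if j ≤ i then dyadicBlockSup a i ^ p else 0) := by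
        gcongr with j
        exact tailSup_two_pow_rpow_le a hp j
    _ ≤ 2 * ∑' j, 2 ^ j * dyadicBlockSup a j ^ p := ENNReal.tsum_two_pow_mul_tsum_ite_le _

theorem tsum_dyadicBlockSup_rpow_le {p : ℝ} (hp : 0 ≤ p) :
    ∑' j, 2 ^ j * dyadicBlockSup a j ^ p ≤ 3 * ∑' n, tailSup a (n + 1) ^ p :=
  calc ∑' j, 2 ^ j * dyadicBlockSup a j ^ p
      ≤ ∑' j : ℕ, 2 ^ j * tailSup a (2 ^ j) ^ p := by
        gcongr with j
        exact dyadicBlockSup_le_tailSup a j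
    _ ≤ 3 * ∑' n, tailSup a (n + 1) ^ p :=
        ENNReal.tsum_condensed_le_three_mul_tsum_succ fun _ _ _ hmn =>
          ENNReal.rpow_le_rpow (tailSup_antitone a hmn) hp

end DyadicBlocks

/-- Block form representation of the Tandori sequence space built on `ℓ_p`. -/
theorem stmt_2 (p : ℝ) (hp : 1 ≤ p) :
    ∃ c C : ℝ, 0 < c ∧ 0 < C ∧ ∀ x : ℕ → ℝ,
      ENNReal.ofReal c * tlBlock p x ≤ tlNorm p x ∧
        tlNorm p x ≤ ENNReal.ofReal C * tlBlock p x := by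
  have hp0 : 0 < p := one_pos.trans_le hp
  refine ⟨1 / 3, 2, by norm_num, by norm_num, fun x => ?_⟩
  set a : ℕ → ℝ≥0∞ := fun n => ENNReal.ofReal |x n|
  have hnorm : tlNorm p x = (∑' n, tailSup a (n + 1) ^ p) ^ (1 / p) := rfl
  have hblock : tlBlock p x = (∑' j, 2 ^ j * dyadicBlockSup a j ^ p) ^ (1 / p) := by
    simp only [tlBlock, ENNReal.rpow_natCast]; rfl
  have hlower : tlBlock p x ≤ 3 * tlNorm p x := by
    rw [hblock, hnorm]
    exact ENNReal.rpow_one_div_le_mul_of_le (by norm_num) hp (tsum_dyadicBlockSup_rpow_le a hp0.le)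
  have hupper : tlNorm p x ≤ 2 * tlBlock p x := by
    rw [hblock, hnorm]
    exact ENNReal.rpow_one_div_le_mul_of_le (by norm_num) hp (tsum_tailSup_succ_rpow_le a hp0)
  have h3 : ENNReal.ofReal (1 / 3) = 3⁻¹ := by
    rw [one_div, ENNReal.ofReal_inv_of_pos (by norm_num)]
    simp
  refine ⟨?_, by simpa using hupper⟩
  rw [h3, ENNReal.inv_mul_le_iff (by norm_num) (by norm_num)]
  exact hlower
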